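/- arXiv:2602.22179 — 3 statements merged into one kernel-verified Lean document; each statement's English description precedes it below -/
import Mathlib

section
/- Fix real numbers α < β and define, for τ > 0 and x ∈ ℝ, the soft condition π̂(x; α, β, τ) := exp((2x − α)/τ) / ( exp(x/τ) + exp((2x − α)/τ) + exp((3x − α − β)/τ) ). Then for every x with α < x < β, the soft condition converges to 1 as the temperature vanishes: lim_{τ → 0⁺} π̂(x; α, β, τ) = 1. -/
open Filter Topology

/-- The soft condition `π̂(x; α, β, τ)` of the paper: a differentiable relaxation of the
Boolean condition `x ∈ (α, β)`, with lower bound `α`, upper bound `β`, temperature `τ`. -/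
noncomputable def softCond (α β τ x : ℝ) : ℝ :=
  Real.exp ((2 * x - α) / τ) /
    (Real.exp (x / τ) + Real.exp ((2 * x - α) / τ) + Real.exp ((3 * x - α - β) / τ))

theorem softCond_eq_inv (α β τ x : ℝ) :
    softCond α β τ x = (Real.exp ((α - x) / τ) + 1 + Real.exp ((x - β) / τ))⁻¹ := by
  have hx : x / τ = (2 * x - α) / τ + (α - x) / τ := by rw [← add_div]; ring_nf
  have hβ : (3 * x - α - β) / τ = (2 * x - α) / τ + (x - β) / τ := by rw [← add_div]; ring_nf
  rw [softCond, hx, hβ, Real.exp_add, Real.exp_add, div_eq_iff (by positivity)]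
  field_simp

theorem tendsto_exp_div_nhdsGT_zero_of_neg {c : ℝ} (hc : c < 0) :
    Tendsto (fun τ => Real.exp (c / τ)) (𝓝[>] 0) (𝓝 0) := by
  have hdiv : Tendsto (fun τ : ℝ => c / τ) (𝓝[>] 0) atBot := by
    simpa only [div_eq_mul_inv] using tendsto_inv_nhdsGT_zero.const_mul_atTop_of_neg hc
  exact Real.tendsto_exp_atBot.comp hdiv

theorem softCond_tendsto_one_of_mem_general
    (α β : ℝ) (x : ℝ) (hα : α < x) (hβ : x < β) :
    Tendsto (fun τ => softCond α β τ x) (𝓝[>] (0 : ℝ)) (𝓝 1) := by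
  have hlow := tendsto_exp_div_nhdsGT_zero_of_neg (sub_neg.mpr hα)
  have hupp := tendsto_exp_div_nhdsGT_zero_of_neg (sub_neg.mpr hβ)
  have hden := (hlow.add_const 1).add hupp
  simp only [zero_add, add_zero] at hden
  simpa only [softCond_eq_inv, inv_one] using hden.inv₀ one_ne_zero

/-- **Inside limit.** For `α < x < β`, the soft condition converges to `1` as the
temperature vanishes, `τ → 0⁺`. -/
theorem softCond_tendsto_one_of_mem
    (α β : ℝ) (hαβ : α < β) (x : ℝ) (hα : α < x) (hβ : x < β) :
    Tendsto (fun τ => softCond α β τ x) (𝓝[>] (0 : ℝ)) (𝓝 1) :=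
  softCond_tendsto_one_of_mem_general α β x hα hβ
end

section
/- Fix real numbers α < β and define, for τ > 0 and x ∈ ℝ, the soft condition π̂(x; α, β, τ) := exp((2x − α)/τ) / ( exp(x/τ) + exp((2x − α)/τ) + exp((3x − α − β)/τ) ). Then for every x with x < α or x > β, the soft condition converges to 0 as the temperature vanishes: lim_{τ → 0⁺} π̂(x; α, β, τ) = 0. -/
open Filter Topology

lemma exp_div_tendsto_zero {c : ℝ} (hc : c < 0) :
    Tendsto (fun τ : ℝ => Real.exp (c / τ)) (𝓝[>] (0 : ℝ)) (𝓝 0) := by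
  have h1 : Tendsto (fun τ : ℝ => c / τ) (𝓝[>] (0 : ℝ)) atBot := by
    simpa [div_eq_mul_inv] using
      ((tendsto_const_mul_atBot_of_neg hc).2 (tendsto_inv_nhdsGT_zero (𝕜 := ℝ)))
  exact Real.tendsto_exp_atBot.comp h1

/-- **Outside limit.** For `x < α` or `x > β`, the soft condition converges to `0` as the
temperature vanishes, `τ → 0⁺`. -/
theorem softCond_tendsto_zero_of_not_mem
    (α β : ℝ) (hαβ : α < β) (x : ℝ) (hx : x < α ∨ β < x) :
    Tendsto (fun τ => softCond α β τ x) (𝓝[>] (0 : ℝ)) (𝓝 0) := by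
  obtain hc | hc := hx
  · -- bound by exp ((x - α)/τ)
    refine squeeze_zero' ?_ ?_ (exp_div_tendsto_zero (c := x - α) (by linarith))
    · filter_upwards with τ
      exact div_nonneg (Real.exp_pos _).le (by positivity)
    · filter_upwards [self_mem_nhdsWithin] with τ (hτ : 0 < τ)
      have hden : Real.exp (x / τ) ≤
          Real.exp (x / τ) + Real.exp ((2 * x - α) / τ) + Real.exp ((3 * x - α - β) / τ) := by
        nlinarith [Real.exp_pos ((2 * x - α) / τ), Real.exp_pos ((3 * x - α - β) / τ)]
      calc softCond α β τ x ≤ Real.exp ((2 * x - α) / τ) / Real.exp (x / τ) :=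
            div_le_div_of_nonneg_left (Real.exp_pos _).le (Real.exp_pos _) hden
        _ = Real.exp ((x - α) / τ) := by
            rw [← Real.exp_sub, ← sub_div]; ring_nf
  · refine squeeze_zero' ?_ ?_ (exp_div_tendsto_zero (c := β - x) (by linarith))
    · filter_upwards with τ
      exact div_nonneg (Real.exp_pos _).le (by positivity)
    · filter_upwards [self_mem_nhdsWithin] with τ (hτ : 0 < τ)
      have hden : Real.exp ((3 * x - α - β) / τ) ≤
          Real.exp (x / τ) + Real.exp ((2 * x - α) / τ) + Real.exp ((3 * x - α - β) / τ) := by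
        nlinarith [Real.exp_pos ((2 * x - α) / τ), Real.exp_pos (x / τ)]
      calc softCond α β τ x ≤ Real.exp ((2 * x - α) / τ) / Real.exp ((3 * x - α - β) / τ) :=
            div_le_div_of_nonneg_left (Real.exp_pos _).le (Real.exp_pos _) hden
        _ = Real.exp ((β - x) / τ) := by
            rw [← Real.exp_sub, ← sub_div]; ring_nf
end

section
/- Fix p ≥ 1, bounds α_j < β_j for j = 1, …, p, weights a₁, …, a_p with a_j > 0 for all j, and a point x ∈ ℝ^p. Define the soft conditions π̂(x_j; α_j, β_j, τ) := exp((2x_j − α_j)/τ) / ( exp(x_j/τ) + exp((2x_j − α_j)/τ) + exp((3x_j − α_j − β_j)/τ) ) and the soft rule σ̂(x; α, β, a, τ) := (Σ_{j=1}^p a_j) / (Σ_{j=1}^p a_j · π̂(x_j; α_j, β_j, τ)⁻¹). If α_j < x_j < β_j for every j = 1, …, p, then lim_{τ → 0⁺} σ̂(x; α, β, a, τ) = 1; whereas if there exists some index k with x_k < α_k or x_k > β_k, then lim_{τ → 0⁺} σ̂(x; α, β, a, τ) = 0. -/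
open Filter Topology

/-- The soft rule `σ̂(x; α, β, a, τ)` of the paper: the weighted harmonic mean of the
per-feature soft conditions. -/
noncomputable def softRule {p : ℕ} (α β a : Fin p → ℝ) (τ : ℝ) (x : Fin p → ℝ) : ℝ :=
  (∑ j, a j) / (∑ j, a j * (softCond (α j) (β j) τ (x j))⁻¹)

/-!
Dividing numerator and denominator of `π̂` by `exp ((2x - α)/τ)` gives
`π̂⁻¹ = exp ((α - x)/τ) + 1 + exp ((x - β)/τ)`. Inside the box both exponents are negative, so
every `π̂_j⁻¹` tends to `1` and so does the harmonic mean `σ̂`. Outside the box one exponent is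
positive, so `π̂_k⁻¹ → ∞`; the denominator of `σ̂` dominates `a_k π̂_k⁻¹` and `σ̂ → 0`.
-/

section WeightedHarmonicMean

variable {ι α : Type*} [Fintype ι] {l : Filter α} {a : ι → ℝ} {g : α → ι → ℝ}

lemma tendsto_sum_div_sum_mul_of_tendsto_one (ha : ∑ i, a i ≠ 0)
    (hg : ∀ i, Tendsto (fun t => g t i) l (𝓝 1)) :
    Tendsto (fun t => (∑ i, a i) / ∑ i, a i * g t i) l (𝓝 1) := by
  have hsum : Tendsto (fun t => ∑ i, a i * g t i) l (𝓝 (∑ i, a i)) := by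
    simpa using tendsto_finsetSum Finset.univ fun i _ => (hg i).const_mul (a i)
  rw [← div_self ha]
  exact tendsto_const_nhds.div hsum ha

lemma tendsto_sum_mul_atTop_of_tendsto_atTop (ha : ∀ i, 0 ≤ a i) (hg : ∀ t i, 0 ≤ g t i)
    {k : ι} (hak : 0 < a k) (hk : Tendsto (fun t => g t k) l atTop) :
    Tendsto (fun t => ∑ i, a i * g t i) l atTop :=
  tendsto_atTop_mono
    (fun t => Finset.single_le_sum (fun i _ => mul_nonneg (ha i) (hg t i)) (Finset.mem_univ k))
    (hk.const_mul_atTop hak)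

end WeightedHarmonicMean

lemma tendsto_const_div_nhdsGT_zero_atTop {c : ℝ} (hc : 0 < c) :
    Tendsto (fun τ : ℝ => c / τ) (𝓝[>] 0) atTop := by
  simpa only [div_eq_mul_inv] using tendsto_inv_nhdsGT_zero.const_mul_atTop hc

lemma tendsto_const_div_nhdsGT_zero_atBot {c : ℝ} (hc : c < 0) :
    Tendsto (fun τ : ℝ => c / τ) (𝓝[>] 0) atBot := by
  simpa only [div_eq_mul_inv] using tendsto_inv_nhdsGT_zero.const_mul_atTop_of_neg hc

lemma softCond_inv (α β τ x : ℝ) :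
    (softCond α β τ x)⁻¹ = Real.exp ((α - x) / τ) + 1 + Real.exp ((x - β) / τ) := by
  have hlow : Real.exp ((α - x) / τ) = Real.exp (x / τ) / Real.exp ((2 * x - α) / τ) := by
    rw [← Real.exp_sub]; congr 1; ring
  have hup : Real.exp ((x - β) / τ) =
      Real.exp ((3 * x - α - β) / τ) / Real.exp ((2 * x - α) / τ) := by
    rw [← Real.exp_sub]; congr 1; ring
  have hne : Real.exp ((2 * x - α) / τ) ≠ 0 := (Real.exp_pos _).ne'
  rw [softCond, hlow, hup]
  field_simp

lemma softCond_inv_pos (α β τ x : ℝ) : 0 < (softCond α β τ x)⁻¹ := by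
  rw [softCond_inv]
  positivity

lemma tendsto_softCond_inv_of_mem_Ioo {α β x : ℝ} (hx : x ∈ Set.Ioo α β) :
    Tendsto (fun τ => (softCond α β τ x)⁻¹) (𝓝[>] 0) (𝓝 1) := by
  have hlow := Real.tendsto_exp_atBot.comp
    (tendsto_const_div_nhdsGT_zero_atBot (sub_neg.2 hx.1))
  have hup := Real.tendsto_exp_atBot.comp
    (tendsto_const_div_nhdsGT_zero_atBot (sub_neg.2 hx.2))
  simpa only [softCond_inv, Function.comp_def, zero_add, add_zero] using
    (hlow.add_const 1).add hup

lemma tendsto_softCond_inv_atTop {α β x : ℝ} (hx : x < α ∨ β < x) :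
    Tendsto (fun τ => (softCond α β τ x)⁻¹) (𝓝[>] 0) atTop := by
  obtain ⟨c, hc, hle⟩ : ∃ c, 0 < c ∧ ∀ τ, Real.exp (c / τ) ≤ (softCond α β τ x)⁻¹ := by
    rcases hx with hx | hx
    · exact ⟨α - x, sub_pos.2 hx, fun τ => by
        rw [softCond_inv]; linarith [Real.exp_pos ((x - β) / τ)]⟩
    · exact ⟨x - β, sub_pos.2 hx, fun τ => by
        rw [softCond_inv]; linarith [Real.exp_pos ((α - x) / τ)]⟩
  exact tendsto_atTop_mono hle
    (Real.tendsto_exp_atTop.comp (tendsto_const_div_nhdsGT_zero_atTop hc))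

theorem softRule_tendsto_indicator_general
    {p : ℕ} (hp : 1 ≤ p) (α β a : Fin p → ℝ)
    (ha : ∀ j, 0 < a j) (x : Fin p → ℝ) :
    ((∀ j, α j < x j ∧ x j < β j) →
        Tendsto (fun τ => softRule α β a τ x) (𝓝[>] (0 : ℝ)) (𝓝 1)) ∧
      ((∃ k, x k < α k ∨ β k < x k) →
        Tendsto (fun τ => softRule α β a τ x) (𝓝[>] (0 : ℝ)) (𝓝 0)) := by
  unfold softRule
  constructor
  · intro hin
    have : Nonempty (Fin p) := Fin.pos_iff_nonempty.mp hp
    exact tendsto_sum_div_sum_mul_of_tendsto_one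
      (Finset.sum_pos (fun j _ => ha j) Finset.univ_nonempty).ne'
      fun j => tendsto_softCond_inv_of_mem_Ioo (hin j)
  · rintro ⟨k, hk⟩
    exact tendsto_const_nhds.div_atTop <| tendsto_sum_mul_atTop_of_tendsto_atTop
      (fun j => (ha j).le) (fun τ j => (softCond_inv_pos _ _ τ _).le) (ha k)
      (tendsto_softCond_inv_atTop hk)

/-- **Annealing the soft rule to a crisp hyper-box.** With bounds `α_j < β_j` and strictly
positive weights `a_j`: if `α_j < x_j < β_j` for every feature `j`, the soft rule converges
to `1` as the temperature vanishes, `τ → 0⁺`; whereas if some feature `k` satisfies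
`x_k < α_k` or `x_k > β_k`, it converges to `0`. -/
theorem softRule_tendsto_indicator
    {p : ℕ} (hp : 1 ≤ p) (α β a : Fin p → ℝ)
    (hαβ : ∀ j, α j < β j) (ha : ∀ j, 0 < a j) (x : Fin p → ℝ) :
    ((∀ j, α j < x j ∧ x j < β j) →
        Tendsto (fun τ => softRule α β a τ x) (𝓝[>] (0 : ℝ)) (𝓝 1)) ∧
      ((∃ k, x k < α k ∨ β k < x k) →
        Tendsto (fun τ => softRule α β a τ x) (𝓝[>] (0 : ℝ)) (𝓝 0)) :=
  softRule_tendsto_indicator_general hp α β a ha x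
end
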